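/- arXiv:1501.01800 — 2 statements merged into one kernel-verified Lean document; each statement's English description precedes it below -/
import Mathlib

section
/- For every continuous function f : [0,1] → ℝ, the Faber series converges uniformly to f: the functions S_J(x) = f(0)(1−x) + f(1)x − (1/2) Σ_{j=0}^{J} Σ_{k=0}^{2^j−1} Δ²_{2^{−j−1}}(f, 2^{−j}k) v_{j,k}(x) converge uniformly on [0,1] to f as J → ∞. -/
open Finset Filter

noncomputable section

/-- The univariate hat (Faber) function `v`. -/
def hatFn (x : ℝ) : ℝ :=
  if 0 ≤ x ∧ x ≤ 1/2 then 2 * x else if 1/2 ≤ x ∧ x ≤ 1 then 2 * (1 - x) else 0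

/-- The second difference `Δ²_h(f,x) = f(x) - 2f(x+h) + f(x+2h)`. -/
def diff2 (h : ℝ) (f : ℝ → ℝ) (x : ℝ) : ℝ := f x - 2 * f (x + h) + f (x + 2 * h)

/-- The partial sums of the Faber series of `f` on `[0,1]`. -/
def faberPartialSum (f : ℝ → ℝ) (J : ℕ) (x : ℝ) : ℝ :=
  f 0 * (1 - x) + f 1 * x -
    (1 / 2) * ∑ j ∈ Finset.range (J + 1), ∑ k ∈ Finset.range (2 ^ j),
      diff2 ((2:ℝ) ^ (-(j:ℝ) - 1)) f ((2:ℝ) ^ (-(j:ℝ)) * k) * hatFn ((2:ℝ) ^ j * x - k)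

lemma hatFn_nonpos {x : ℝ} (h : x ≤ 0) : hatFn x = 0 := by
  unfold hatFn
  rcases eq_or_lt_of_le h with h | h
  · subst h; norm_num
  · rw [if_neg, if_neg] <;> push_neg <;> intro h1 <;> linarith

lemma hatFn_one_le {x : ℝ} (h : 1 ≤ x) : hatFn x = 0 := by
  unfold hatFn
  rcases eq_or_lt_of_le h with h | h
  · rw [← h]; norm_num
  · rw [if_neg, if_neg] <;> push_neg <;> intro h1 <;> linarith

lemma hatFn_left {x : ℝ} (h0 : 0 ≤ x) (h : x ≤ 1/2) : hatFn x = 2 * x := by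
  unfold hatFn; rw [if_pos ⟨h0, h⟩]

lemma hatFn_right {x : ℝ} (h0 : 1/2 ≤ x) (h : x ≤ 1) : hatFn x = 2 * (1 - x) := by
  unfold hatFn
  rcases eq_or_lt_of_le h0 with h0 | h0
  · rw [← h0]; norm_num
  · rw [if_neg, if_pos ⟨le_of_lt h0, h⟩]; push_neg; intro h1; linarith

/-- Piecewise-linear interpolation of `f` at dyadic nodes of level `n`. -/
def interp (f : ℝ → ℝ) (n : ℕ) (x : ℝ) : ℝ :=
  (1 - ((2:ℝ)^n * x - ⌊(2:ℝ)^n * x⌋₊)) * f (((2:ℝ)^n)⁻¹ * ⌊(2:ℝ)^n * x⌋₊)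
    + ((2:ℝ)^n * x - ⌊(2:ℝ)^n * x⌋₊) * f (((2:ℝ)^n)⁻¹ * ⌊(2:ℝ)^n * x⌋₊ + ((2:ℝ)^n)⁻¹)

lemma interp_base (f : ℝ → ℝ) {x : ℝ} (hx0 : 0 ≤ x) (hx1 : x < 1) :
    interp f 0 x = f 0 * (1 - x) + f 1 * x := by
  unfold interp
  rw [Nat.floor_eq_zero.2 (by norm_num; linarith)]
  norm_num; ring


lemma interp_step (f : ℝ → ℝ) (n : ℕ) {x : ℝ} (hx0 : 0 ≤ x) (hx1 : x < 1) :
    interp f (n+1) x = interp f n x -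
      (1/2) * ∑ k ∈ Finset.range (2^n),
        diff2 (((2:ℝ)^(n+1))⁻¹) f (((2:ℝ)^n)⁻¹ * k) * hatFn ((2:ℝ)^n * x - k) := by
  have hp0 : (0:ℝ) < (2:ℝ)^n := by positivity
  set p : ℝ := (2:ℝ)^n with hp
  set K : ℕ := ⌊p * x⌋₊ with hK
  have hpx0 : 0 ≤ p * x := by positivity
  have hKle : (K:ℝ) ≤ p * x := Nat.floor_le hpx0
  have hKlt : p * x < K + 1 := Nat.lt_floor_add_one _
  have hKN : K < 2^n := by
    rw [hK, Nat.floor_lt hpx0]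
    push_cast
    nlinarith
  have hsum : ∑ k ∈ Finset.range (2^n),
        diff2 (((2:ℝ)^(n+1))⁻¹) f (p⁻¹ * k) * hatFn (p * x - k)
      = diff2 (((2:ℝ)^(n+1))⁻¹) f (p⁻¹ * K) * hatFn (p * x - K) := by
    apply Finset.sum_eq_single_of_mem K (Finset.mem_range.2 hKN)
    intro k _ hne
    rcases lt_or_gt_of_ne hne with h | h
    · rw [hatFn_one_le, mul_zero]
      have : (k:ℝ) + 1 ≤ K := by exact_mod_cast h
      linarith
    · rw [hatFn_nonpos, mul_zero]
      have : (K:ℝ) + 1 ≤ k := by exact_mod_cast h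
      linarith
  rw [hsum]
  have hq : ((2:ℝ)^(n+1)) = 2 * p := by rw [hp]; ring
  set t : ℝ := p * x - K with ht
  have ht0 : 0 ≤ t := by simp [ht]; linarith
  have ht1 : t < 1 := by simp [ht]; linarith
  rcases lt_or_ge t (1/2) with h2 | h2
  · -- left half: floor (2p x) = 2K
    have hfl : ⌊(2:ℝ)^(n+1) * x⌋₊ = 2 * K := by
      rw [Nat.floor_eq_iff (by positivity)]
      push_cast
      constructor <;> nlinarith
    have hhat : hatFn (p * x - K) = 2 * t := by rw [← ht]; exact hatFn_left ht0 (le_of_lt h2)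
    rw [hhat]
    unfold interp diff2
    rw [hfl, hq]
    rw [show ((2:ℝ)*p)⁻¹ * ((2*K : ℕ):ℝ) = p⁻¹ * K by push_cast; field_simp]
    rw [show p⁻¹ * K + (2*p)⁻¹ = p⁻¹ * ↑K + (2*p)⁻¹ from rfl]
    rw [show p⁻¹ * (K:ℝ) + 2 * (2*p)⁻¹ = p⁻¹ * K + p⁻¹ by field_simp]
    have harg : (2:ℝ) * p * x - ((2*K:ℕ):ℝ) = 2 * t := by push_cast; rw [ht]; ring
    rw [harg, ← hp, ← ht]
    ring
  · -- right half: floor (2p x) = 2K+1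
    have hfl : ⌊(2:ℝ)^(n+1) * x⌋₊ = 2 * K + 1 := by
      rw [Nat.floor_eq_iff (by positivity)]
      push_cast
      constructor <;> nlinarith
    have hhat : hatFn (p * x - K) = 2 * (1 - t) := by
      rw [← ht]; exact hatFn_right h2 (le_of_lt ht1)
    rw [hhat]
    unfold interp diff2
    rw [hfl, hq]
    rw [show ((2:ℝ)*p)⁻¹ * ((2*K+1 : ℕ):ℝ) = p⁻¹ * K + (2*p)⁻¹ by push_cast; field_simp]
    rw [show p⁻¹ * (K:ℝ) + (2*p)⁻¹ + (2*p)⁻¹ = p⁻¹ * K + p⁻¹ by field_simp; ring]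
    rw [show p⁻¹ * (K:ℝ) + 2 * (2*p)⁻¹ = p⁻¹ * K + p⁻¹ by field_simp]
    have harg : (2:ℝ) * p * x - ((2*K+1:ℕ):ℝ) = 2 * t - 1 := by push_cast; rw [ht]; ring
    rw [harg, ← hp, ← ht]
    ring

lemma rpow_neg_natCast' (j : ℕ) : (2:ℝ) ^ (-(j:ℝ)) = ((2:ℝ)^j)⁻¹ := by
  rw [Real.rpow_neg (by norm_num), Real.rpow_natCast]

lemma rpow_neg_sub' (j : ℕ) : (2:ℝ) ^ (-(j:ℝ) - 1) = ((2:ℝ)^(j+1))⁻¹ := by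
  have h : (-(j:ℝ) - 1) = -(((j+1 : ℕ) : ℝ)) := by push_cast; ring
  rw [h, Real.rpow_neg (by norm_num), Real.rpow_natCast]

lemma faber_eq_interp (f : ℝ → ℝ) (J : ℕ) {x : ℝ} (hx0 : 0 ≤ x) (hx1 : x < 1) :
    faberPartialSum f J x = interp f (J+1) x := by
  induction J with
  | zero =>
    unfold faberPartialSum
    simp only [rpow_neg_sub', rpow_neg_natCast', Finset.sum_range_one]
    rw [interp_step f 0 hx0 hx1, interp_base f hx0 hx1]
    norm_num
  | succ J ih =>
    unfold faberPartialSum at ih ⊢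
    simp only [rpow_neg_sub', rpow_neg_natCast'] at ih ⊢
    rw [show J + 1 + 1 = (J + 1) + 1 from rfl, Finset.sum_range_succ,
      interp_step f (J+1) hx0 hx1, ← ih]
    ring

lemma faber_at_one (f : ℝ → ℝ) (J : ℕ) : faberPartialSum f J 1 = f 1 := by
  unfold faberPartialSum
  rw [Finset.sum_eq_zero]
  · ring
  intro j _
  apply Finset.sum_eq_zero
  intro k hk
  rw [hatFn_one_le, mul_zero]
  have hk' : (k:ℝ) + 1 ≤ (2:ℝ)^j := by
    have := Finset.mem_range.1 hk
    have : (k:ℝ) + 1 ≤ ((2^j : ℕ) : ℝ) := by exact_mod_cast this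
    push_cast at this
    linarith
  linarith

/-- Faber's theorem: the Faber series of a continuous function on `[0,1]` converges
uniformly to the function. -/
theorem faber_series_uniform_convergence
    (f : ℝ → ℝ) (hf : ContinuousOn f (Set.Icc 0 1)) :
    TendstoUniformlyOn (faberPartialSum f) f atTop (Set.Icc 0 1) := by
  rw [Metric.tendstoUniformlyOn_iff]
  intro ε hε
  obtain ⟨δ, hδ0, hδ⟩ := Metric.uniformContinuousOn_iff.1
    (isCompact_Icc.uniformContinuousOn_of_continuous hf) (ε/2) (by linarith)
  have hev : ∀ᶠ J : ℕ in atTop, (((2:ℝ)^(J+1))⁻¹) < δ := by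
    have h : Tendsto (fun J : ℕ => ((2:ℝ)⁻¹)^(J+1)) atTop (nhds 0) := by
      exact (tendsto_pow_atTop_nhds_zero_of_lt_one (by norm_num) (by norm_num)).comp
        (tendsto_add_atTop_nat 1)
    have := h.eventually_lt_const hδ0
    simpa [inv_pow] using this
  filter_upwards [hev] with J hJ
  intro x hx
  rcases eq_or_lt_of_le hx.2 with h1 | h1
  · simp [h1, faber_at_one, Real.dist_eq, hε]
  rw [faber_eq_interp f J hx.1 h1]
  -- estimate
  have hp0 : (0:ℝ) < (2:ℝ)^(J+1) := by positivity
  set p : ℝ := (2:ℝ)^(J+1) with hp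
  set K : ℕ := ⌊p * x⌋₊ with hK
  have hpx0 : 0 ≤ p * x := mul_nonneg (le_of_lt hp0) hx.1
  have hKle : (K:ℝ) ≤ p * x := Nat.floor_le hpx0
  have hKlt : p * x < K + 1 := Nat.lt_floor_add_one _
  have hKN : (K:ℝ) + 1 ≤ p := by
    have h2 : K < 2^(J+1) := by
      rw [hK, Nat.floor_lt hpx0]; push_cast; nlinarith
    have : (K:ℝ) + 1 ≤ ((2^(J+1) : ℕ):ℝ) := by exact_mod_cast h2
    push_cast at this; linarith
  set t : ℝ := p * x - K with ht
  have ht0 : 0 ≤ t := by simp [ht]; linarith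
  have ht1 : t < 1 := by simp [ht]; linarith
  set c : ℝ := p⁻¹ * K with hc
  have hcx : x - c = t / p := by rw [hc, ht]; field_simp
  have hc2x : c + p⁻¹ - x = (1 - t) / p := by rw [hc, ht]; field_simp; ring
  have hcI : c ∈ Set.Icc (0:ℝ) 1 := by
    constructor
    · rw [hc]; positivity
    · rw [hc, inv_mul_le_iff₀ hp0, mul_one]; linarith
  have hc2I : c + p⁻¹ ∈ Set.Icc (0:ℝ) 1 := by
    constructor
    · have : (0:ℝ) ≤ c := hcI.1
      have : (0:ℝ) < p⁻¹ := by positivity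
      linarith
    · have : c + p⁻¹ = p⁻¹ * (K + 1) := by rw [hc]; ring
      rw [this, inv_mul_le_iff₀ hp0, mul_one]; exact hKN
  have hple : t / p ≤ p⁻¹ := by
    rw [div_eq_mul_inv]
    nlinarith [inv_pos.2 hp0]
  have hple2 : (1 - t) / p ≤ p⁻¹ := by
    rw [div_eq_mul_inv]
    nlinarith [inv_pos.2 hp0]
  have hd1 : dist x c < δ := by
    rw [Real.dist_eq, abs_of_nonneg (by rw [hcx]; exact div_nonneg ht0 (le_of_lt hp0)), hcx]
    linarith
  have hd2 : dist x (c + p⁻¹) < δ := by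
    rw [Real.dist_eq, abs_sub_comm, abs_of_nonneg (by rw [hc2x]; exact div_nonneg (by linarith) (le_of_lt hp0)), hc2x]
    linarith
  have hu := hδ x hx c hcI hd1
  have hv := hδ x hx (c + p⁻¹) hc2I hd2
  rw [Real.dist_eq] at hu hv
  have hint : interp f (J+1) x = (1-t) * f c + t * f (c + p⁻¹) := by
    unfold interp
    rw [← hp, ← hK, ← ht, ← hc]
  rw [Real.dist_eq, hint]
  have hA : f x - ((1-t) * f c + t * f (c + p⁻¹))
      = (1-t) * (f x - f c) + t * (f x - f (c + p⁻¹)) := by ring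
  rw [hA]
  have h := abs_add_le ((1-t) * (f x - f c)) (t * (f x - f (c + p⁻¹)))
  rw [abs_mul, abs_mul, abs_of_nonneg (by linarith : (0:ℝ) ≤ 1 - t),
    abs_of_nonneg ht0] at h
  nlinarith [mul_le_mul_of_nonneg_left (le_of_lt hu) (by linarith : (0:ℝ) ≤ 1 - t),
    mul_le_mul_of_nonneg_left (le_of_lt hv) ht0]
end
end

section
/- For every continuous 1-periodic function f : ℝ → ℝ, the periodic Faber series converges uniformly to f: the functions S_J(x) = f(0) − (1/2) Σ_{j=0}^{J} Σ_{k=0}^{2^j−1} Δ²_{2^{−j−1}}(f, 2^{−j}k) v_{j,k}(x) converge uniformly on ℝ to f as J → ∞. -/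
open Finset Filter

noncomputable section

/-- The 1-periodic extension of the hat function `v_{j,k}`. -/
def hatPer (j k : ℕ) (x : ℝ) : ℝ := hatFn ((2:ℝ) ^ j * Int.fract x - k)

/-- The partial sums of the periodic Faber series of `f`. -/
def faberPartialSumPer (f : ℝ → ℝ) (J : ℕ) (x : ℝ) : ℝ :=
  f 0 -
    (1 / 2) * ∑ j ∈ Finset.range (J + 1), ∑ k ∈ Finset.range (2 ^ j),
      diff2 ((2:ℝ) ^ (-(j:ℝ) - 1)) f ((2:ℝ) ^ (-(j:ℝ)) * k) * hatPer j k x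

/-- Piecewise linear interpolant at dyadic level `n` (of the 1-periodization). -/
def lin (f : ℝ → ℝ) (n : ℕ) (x : ℝ) : ℝ :=
  f ((⌊(2:ℝ) ^ n * Int.fract x⌋ : ℝ) / 2 ^ n)
    + Int.fract ((2:ℝ) ^ n * Int.fract x)
      * (f (((⌊(2:ℝ) ^ n * Int.fract x⌋ : ℝ) + 1) / 2 ^ n)
          - f ((⌊(2:ℝ) ^ n * Int.fract x⌋ : ℝ) / 2 ^ n))

lemma hatFn_eq_zero {y : ℝ} (h : y ≤ 0 ∨ 1 ≤ y) : hatFn y = 0 := by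
  unfold hatFn
  split_ifs with h1 h2
  · obtain ⟨a, b⟩ := h1; rcases h with h|h <;> linarith
  · obtain ⟨a, b⟩ := h2; rcases h with h|h <;> linarith
  · rfl

lemma rpow_neg_nat (n : ℕ) : (2:ℝ) ^ (-(n:ℝ)) = ((2:ℝ) ^ n)⁻¹ := by
  rw [← Real.rpow_natCast 2 n, ← Real.rpow_neg (by norm_num)]

lemma rpow_neg_nat' (n : ℕ) : (2:ℝ) ^ (-(n:ℝ) - 1) = ((2:ℝ) ^ (n+1))⁻¹ := by
  have h : (-(n:ℝ) - 1) = -(((n+1 : ℕ)) : ℝ) := by push_cast; try ring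
  rw [h, ← Real.rpow_natCast 2 (n+1), ← Real.rpow_neg (by norm_num)]

lemma lin_step (f : ℝ → ℝ) (n : ℕ) (x : ℝ) :
    lin f (n+1) x = lin f n x -
      (1/2) * ∑ k ∈ Finset.range (2 ^ n),
        diff2 ((2:ℝ) ^ (-(n:ℝ) - 1)) f ((2:ℝ) ^ (-(n:ℝ)) * k) * hatPer n k x := by
  set t := Int.fract x with ht
  have ht0 : 0 ≤ t := Int.fract_nonneg x
  have ht1 : t < 1 := Int.fract_lt_one x
  set K : ℤ := ⌊(2:ℝ) ^ n * t⌋ with hKdef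
  have hpos : (0:ℝ) < 2 ^ n := by positivity
  have hK0 : 0 ≤ K := Int.floor_nonneg.2 (by positivity)
  have hKlt : K < 2 ^ n := by
    rw [hKdef]
    rw [Int.floor_lt]
    push_cast
    nlinarith
  set s : ℝ := Int.fract ((2:ℝ) ^ n * t) with hsdef
  have hs0 : 0 ≤ s := Int.fract_nonneg _
  have hs1 : s < 1 := Int.fract_lt_one _
  have hKs : (2:ℝ) ^ n * t = K + s := by rw [hsdef, Int.fract]; ring
  -- collapse the sum
  have hmem : K.toNat ∈ Finset.range (2 ^ n) := by
    rw [Finset.mem_range]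
    have h2 : ((2:ℤ)^n) = ((2^n : ℕ) : ℤ) := by push_cast; try ring
    omega
  have hcollapse : ∑ k ∈ Finset.range (2 ^ n),
      diff2 ((2:ℝ) ^ (-(n:ℝ) - 1)) f ((2:ℝ) ^ (-(n:ℝ)) * k) * hatPer n k x
      = diff2 ((2:ℝ) ^ (-(n:ℝ) - 1)) f ((2:ℝ) ^ (-(n:ℝ)) * K.toNat) * hatPer n K.toNat x := by
    refine Finset.sum_eq_single_of_mem _ hmem ?_
    intro k hk hne
    have hkK : (k : ℤ) ≠ K := by
      intro hcontra; apply hne; omega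
    have hzero : hatPer n k x = 0 := by
      rw [hatPer, ← ht]
      apply hatFn_eq_zero
      rcases lt_or_gt_of_ne hkK with h | h
      · right
        have : (k:ℝ) + 1 ≤ K := by exact_mod_cast Int.add_one_le_of_lt h
        linarith
      · left
        have : (K:ℝ) + 1 ≤ k := by exact_mod_cast Int.add_one_le_of_lt h
        linarith
    rw [hzero, mul_zero]
  rw [hcollapse]
  have hKnat : ((K.toNat : ℕ) : ℝ) = (K : ℝ) := by
    exact_mod_cast congrArg (Int.cast : ℤ → ℝ) (Int.toNat_of_nonneg hK0)
  have hhat : hatPer n K.toNat x = hatFn s := by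
    rw [hatPer, ← ht, hKnat]
    congr 1
  rw [hhat]
  rw [rpow_neg_nat, rpow_neg_nat']
  -- arguments
  have harg1 : (2:ℝ)^n * t = (K:ℝ) + s := hKs
  rcases lt_or_ge s (1/2) with hhalf | hhalf
  · -- first half
    have hfl : ⌊(2:ℝ) ^ (n+1) * t⌋ = 2 * K := by
      have : (2:ℝ) ^ (n+1) * t = (2*K : ℤ) + 2*s := by push_cast; rw [pow_succ]; nlinarith [hKs]
      rw [this, Int.floor_intCast_add]
      have : ⌊2*s⌋ = 0 := by rw [Int.floor_eq_zero_iff]; exact ⟨by linarith, by linarith⟩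
      omega
    have hfr : Int.fract ((2:ℝ) ^ (n+1) * t) = 2*s := by
      rw [Int.fract, hfl]
      push_cast
      rw [pow_succ]
      nlinarith [hKs]
    have hv : hatFn s = 2*s := by
      rw [hatFn, if_pos ⟨hs0, le_of_lt hhalf⟩]
    rw [lin, lin, ← ht, ← hKdef, ← hsdef, hfl, hfr, hv, diff2]
    have e1 : ((2*K : ℤ) : ℝ) / 2 ^ (n+1) = (K:ℝ) / 2^n := by push_cast; field_simp; try ring
    have e2 : ((2:ℝ)^n)⁻¹ * (K.toNat : ℕ) = (K:ℝ)/2^n := by rw [hKnat]; field_simp; try ring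
    have e3 : (K:ℝ)/2^n + ((2:ℝ)^(n+1))⁻¹ = (((2*K : ℤ) : ℝ) + 1) / 2 ^ (n+1) := by
      push_cast; field_simp; try ring
    have e4 : (K:ℝ)/2^n + 2*((2:ℝ)^(n+1))⁻¹ = ((K:ℝ) + 1) / 2 ^ n := by
      field_simp; try ring
    rw [e1, e2, e3, e4]
    ring
  · -- second half
    have hfl : ⌊(2:ℝ) ^ (n+1) * t⌋ = 2 * K + 1 := by
      have h2 : (2:ℝ) ^ (n+1) * t = (2*K+1 : ℤ) + (2*s - 1) := by
        push_cast; rw [pow_succ]; nlinarith [hKs]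
      rw [h2, Int.floor_intCast_add]
      have : ⌊2*s - 1⌋ = 0 := by rw [Int.floor_eq_zero_iff]; exact ⟨by linarith, by linarith⟩
      omega
    have hfr : Int.fract ((2:ℝ) ^ (n+1) * t) = 2*s - 1 := by
      rw [Int.fract, hfl]
      push_cast
      rw [pow_succ]
      nlinarith [hKs]
    have hv : hatFn s = 2*(1-s) := by
      rcases eq_or_lt_of_le hhalf with h | h
      · rw [hatFn, if_pos ⟨hs0, le_of_eq h.symm⟩, ← h]; ring
      · rw [hatFn, if_neg (fun hc => absurd hc.2 (not_le.2 h)), if_pos ⟨hhalf, le_of_lt hs1⟩]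
    rw [lin, lin, ← ht, ← hKdef, ← hsdef, hfl, hfr, hv, diff2]
    have e1 : ((2*K+1 : ℤ) : ℝ) / 2 ^ (n+1) = ((2*(K:ℝ)+1)) / 2^(n+1) := by push_cast; try ring
    have e2 : ((2:ℝ)^n)⁻¹ * (K.toNat : ℕ) = (K:ℝ)/2^n := by rw [hKnat]; field_simp; try ring
    have e3 : (K:ℝ)/2^n + ((2:ℝ)^(n+1))⁻¹ = ((2*(K:ℝ)+1)) / 2 ^ (n+1) := by
      field_simp; try ring
    have e4 : (K:ℝ)/2^n + 2*((2:ℝ)^(n+1))⁻¹ = ((K:ℝ) + 1) / 2 ^ n := by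
      field_simp; try ring
    have e5 : (((2*K+1 : ℤ) : ℝ) + 1) / 2 ^ (n+1) = ((K:ℝ) + 1) / 2 ^ n := by
      push_cast; field_simp; try ring
    rw [e1, e2, e3, e4, e5]
    ring

lemma lin_zero (f : ℝ → ℝ) (hper : Function.Periodic f 1) (x : ℝ) :
    lin f 0 x = f 0 := by
  have h1 : ⌊(1:ℝ) * Int.fract x⌋ = 0 := by
    rw [one_mul, Int.floor_eq_zero_iff]
    exact ⟨Int.fract_nonneg x, Int.fract_lt_one x⟩
  have hf1 : f 1 = f 0 := by simpa using hper 0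
  simp [lin, h1, hf1]

lemma fract_per (f : ℝ → ℝ) (hper : Function.Periodic f 1) (x : ℝ) :
    f (Int.fract x) = f x := by
  rw [Int.fract]
  simpa using hper.sub_int_mul_eq (x := x) ⌊x⌋

lemma unifCont (f : ℝ → ℝ) (hf : Continuous f) (hper : Function.Periodic f 1) :
    UniformContinuous f := by
  rw [Metric.uniformContinuous_iff]
  intro ε hε
  have hc : UniformContinuousOn f (Set.Icc (0:ℝ) 2) :=
    (isCompact_Icc).uniformContinuousOn_of_continuous hf.continuousOn
  obtain ⟨δ, hδ0, hδ⟩ := (Metric.uniformContinuousOn_iff).1 hc ε hε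
  refine ⟨min δ 1, by positivity, ?_⟩
  intro a b hab
  have hab1 : dist a b < 1 := lt_of_lt_of_le hab (min_le_right _ _)
  have habδ : dist a b < δ := lt_of_lt_of_le hab (min_le_left _ _)
  set m : ℤ := ⌊min a b⌋ with hm
  have hfr0 : 0 ≤ min a b - m := by
    rw [hm]; linarith [Int.floor_le (min a b)]
  have hfr1 : min a b - m < 1 := by
    rw [hm]; linarith [Int.lt_floor_add_one (min a b)]
  have hmem : ∀ c : ℝ, min a b ≤ c → dist c (min a b) < 1 → c - m ∈ Set.Icc (0:ℝ) 2 := by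
    intro c hc hd
    rw [Real.dist_eq, abs_of_nonneg (by linarith)] at hd
    exact ⟨by linarith, by linarith⟩
  have hma : a - m ∈ Set.Icc (0:ℝ) 2 := by
    apply hmem a (min_le_left _ _)
    rw [Real.dist_eq]
    rcases le_total a b with h | h
    · simp [min_eq_left h]
    · rw [min_eq_right h, abs_of_nonneg (by linarith)]
      rw [Real.dist_eq] at hab1
      calc a - b ≤ |a - b| := le_abs_self _
        _ < 1 := hab1
  have hmb : b - m ∈ Set.Icc (0:ℝ) 2 := by
    apply hmem b (min_le_right _ _)
    rw [Real.dist_eq]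
    rcases le_total a b with h | h
    · rw [min_eq_left h, abs_of_nonneg (by linarith)]
      rw [Real.dist_eq] at hab1
      calc b - a ≤ |b - a| := le_abs_self _
        _ = |a - b| := abs_sub_comm _ _
        _ < 1 := hab1
    · simp [min_eq_right h]
  have hda : f (a - m) = f a := by simpa using hper.sub_int_mul_eq (x := a) m
  have hdb : f (b - m) = f b := by simpa using hper.sub_int_mul_eq (x := b) m
  rw [← hda, ← hdb]
  apply hδ _ hma _ hmb
  rw [Real.dist_eq] at habδ ⊢
  simpa using habδ

lemma faber_eq_lin (f : ℝ → ℝ) (hper : Function.Periodic f 1) (J : ℕ) (x : ℝ) :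
    faberPartialSumPer f J x = lin f (J+1) x := by
  induction J with
  | zero =>
      rw [lin_step f 0 x, lin_zero f hper x]
      simp [faberPartialSumPer]
  | succ J ih =>
      rw [faberPartialSumPer, Finset.sum_range_succ, mul_add, lin_step f (J+1) x, ← ih,
        faberPartialSumPer]
      ring

/-- The periodic Faber series of a continuous 1-periodic function converges uniformly
on `ℝ` to the function. -/
theorem periodic_faber_series_uniform_convergence
    (f : ℝ → ℝ) (hf : Continuous f) (hper : Function.Periodic f 1) :
    TendstoUniformly (faberPartialSumPer f) f atTop := by
  rw [Metric.tendstoUniformly_iff]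
  intro ε hε
  obtain ⟨δ, hδ0, hδ⟩ := Metric.uniformContinuous_iff.1 (unifCont f hf hper) (ε/2) (by linarith)
  obtain ⟨N, hN⟩ : ∃ N : ℕ, ((1:ℝ)/2) ^ N < δ := exists_pow_lt_of_lt_one hδ0 (by norm_num)
  have hN' : (1:ℝ)/2^N < δ := by rwa [div_pow, one_pow] at hN
  filter_upwards [Filter.eventually_ge_atTop N] with J hJ
  intro x
  rw [faber_eq_lin f hper J x]
  set n := J + 1 with hn
  have hnN : N ≤ n := by omega
  have hpown : (1:ℝ)/2^n ≤ 1/2^N := by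
    apply one_div_le_one_div_of_le (by positivity)
    exact pow_le_pow_right₀ (by norm_num) hnN
  have hsmall : (1:ℝ)/2^n < δ := lt_of_le_of_lt hpown hN'
  set t := Int.fract x with ht
  have ht0 : 0 ≤ t := Int.fract_nonneg x
  have ht1 : t < 1 := Int.fract_lt_one x
  set K : ℤ := ⌊(2:ℝ) ^ n * t⌋ with hKdef
  set s : ℝ := Int.fract ((2:ℝ) ^ n * t) with hsdef
  have hs0 : 0 ≤ s := Int.fract_nonneg _
  have hs1 : s < 1 := Int.fract_lt_one _
  have hKs : (2:ℝ) ^ n * t = K + s := by rw [hsdef, Int.fract]; ring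
  have hpos : (0:ℝ) < 2 ^ n := by positivity
  have hft : f t = f x := fract_per f hper x
  set A : ℝ := (K:ℝ) / 2 ^ n with hA
  set B : ℝ := ((K:ℝ) + 1) / 2 ^ n with hB
  have key : f x - lin f n x = (1-s) * (f t - f A) + s * (f t - f B) := by
    rw [← hft, lin, ← ht, ← hKdef, ← hsdef, ← hA, ← hB]
    ring
  have hdA : dist t A < δ := by
    rw [Real.dist_eq, hA]
    have he : t - (K:ℝ)/2^n = s / 2^n := by
      field_simp
      linarith [hKs]
    rw [he, abs_of_nonneg (by positivity)]
    have : s / 2^n ≤ 1/2^n := by gcongr <;> linarith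
    linarith
  have hdB : dist t B < δ := by
    rw [Real.dist_eq, hB]
    have he : t - ((K:ℝ)+1)/2^n = -((1-s) / 2^n) := by
      field_simp
      linarith [hKs]
    rw [he, abs_neg, abs_of_nonneg (div_nonneg (by linarith) (by positivity))]
    have : (1-s) / 2^n ≤ 1/2^n := by gcongr <;> linarith
    linarith
  have b1 : |f t - f A| < ε/2 := by
    have := hδ hdA
    rwa [Real.dist_eq] at this
  have b2 : |f t - f B| < ε/2 := by
    have := hδ hdB
    rwa [Real.dist_eq] at this
  rw [Real.dist_eq]
  have habs : |f x - lin f n x| ≤ (1-s) * |f t - f A| + s * |f t - f B| := by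
    rw [key]
    refine (abs_add_le _ _).trans ?_
    rw [abs_mul, abs_mul, abs_of_nonneg (by linarith), abs_of_nonneg hs0]
  have h1 : (1-s) * |f t - f A| ≤ (1-s) * (ε/2) :=
    mul_le_mul_of_nonneg_left b1.le (by linarith)
  have h2 : s * |f t - f B| ≤ s * (ε/2) :=
    mul_le_mul_of_nonneg_left b2.le hs0
  have : |f x - lin f n x| ≤ ε/2 := by nlinarith
  linarith
end
end
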